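/- Positivity trick for the main-term sums: Let M ≥ 1, t > 0, let b, c, d be positive integers, set c' = c/gcd(c,d), and let f : ℝ → ℂ be any function. Call a Gaussian integer 𝔪 = u + i·b·w (with u, w ∈ ℤ) admissible if gcd(u, bw) = 1, u² + b²w² is odd, M < u² + b²w² ≤ 2M, and gcd(w, c) = 1. Define T = ∑∑ over pairs of admissible (𝔪₁, 𝔪₂) with u₁·w̄₁ ≡ u₂·w̄₂ (mod c) of μ(m₁)·μ(m₂)·f(t·m₁)·conj(f(t·m₂)), where mⱼ = uⱼ² + b²wⱼ² and w̄ⱼ is the multiplicative inverse of wⱼ modulo c, and let T* be the same double sum restricted further to pairs with 𝔪₁·𝔪₂ coprime to c' in ℤ[i]. Then T and T* are real and 0 ≤ T* ≤ T. -/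

import Mathlib

/-!
Grouping the pairs by the class `z = u·w̄ mod c` writes `T = ∑_z |S_z|²`, where `S_z` is the sum
of `μ(m) f(t m)` over the admissible `𝔪` in that class, and likewise `T* = ∑_z |S*_z|²`.
Coprimality of `𝔪₁𝔪₂` to `c'` in `ℤ[i]` amounts to coprimality of both norms `m = u² + b²w²`
to `c'` in `ℤ`, and this depends only on the class: `u₁w₂ ≡ u₂w₁ (mod c)` gives
`m₁w₂² ≡ m₂w₁² (mod c')` with `w₁, w₂` units mod `c`. So each `S*_z` is `S_z` or `0`.
-/

open Finset ArithmeticFunction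

/-- `𝔪 = u + i·b·w` is admissible: `gcd(u, bw) = 1`, `u² + b²w²` is odd,
`M < u² + b²w² ≤ 2M`, and `gcd(w, c) = 1`. -/
def admissible (M : ℝ) (b c : ℕ) (u w : ℤ) : Prop :=
  Int.gcd u ((b : ℤ) * w) = 1 ∧ Odd (u ^ 2 + (b : ℤ) ^ 2 * w ^ 2) ∧
    M < ((u ^ 2 + (b : ℤ) ^ 2 * w ^ 2 : ℤ) : ℝ) ∧
    ((u ^ 2 + (b : ℤ) ^ 2 * w ^ 2 : ℤ) : ℝ) ≤ 2 * M ∧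
    Int.gcd w (c : ℤ) = 1

/-- The grid of pairs `(u, w)` used to index the Gaussian integers `u + i·b·w`
of norm at most `2M`. -/
noncomputable def pairGrid (M : ℝ) : Finset (ℤ × ℤ) :=
  Finset.Icc (-(⌈2 * M⌉)) ⌈2 * M⌉ ×ˢ Finset.Icc (-(⌈2 * M⌉)) ⌈2 * M⌉

open Classical in
/-- The generic double sum over pairs of admissible Gaussian integers congruent
modulo `c`, restricted by an extra predicate `P`. -/
noncomputable def Tgen (M t : ℝ) (b c : ℕ) (f : ℝ → ℂ)
    (P : ℤ × ℤ → ℤ × ℤ → Prop) : ℂ :=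
  ∑ p₁ ∈ pairGrid M, ∑ p₂ ∈ pairGrid M,
    if admissible M b c p₁.1 p₁.2 ∧ admissible M b c p₂.1 p₂.2 ∧
        ((p₁.1 : ZMod c) * ((p₁.2 : ZMod c))⁻¹ = (p₂.1 : ZMod c) * ((p₂.2 : ZMod c))⁻¹) ∧
        P p₁ p₂ then
      ((moebius (p₁.1 ^ 2 + (b : ℤ) ^ 2 * p₁.2 ^ 2).toNat : ℤ) : ℂ) *
        ((moebius (p₂.1 ^ 2 + (b : ℤ) ^ 2 * p₂.2 ^ 2).toNat : ℤ) : ℂ) *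
        f (t * ((p₁.1 ^ 2 + (b : ℤ) ^ 2 * p₁.2 ^ 2 : ℤ) : ℝ)) *
        starRingEnd ℂ (f (t * ((p₂.1 ^ 2 + (b : ℤ) ^ 2 * p₂.2 ^ 2 : ℤ) : ℝ)))
    else 0

namespace Zsqrtd

variable {d : ℤ}

theorem isCoprime_of_isCoprime_intCast {a b : ℤ} (h : IsCoprime (a : ℤ√d) (b : ℤ√d)) :
    IsCoprime a b := by
  obtain ⟨x, y, hxy⟩ := h
  refine ⟨x.re, y.re, ?_⟩
  simpa using congrArg Zsqrtd.re hxy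

theorem isCoprime_intCast_iff {x : ℤ√d} {n : ℤ} : IsCoprime x n ↔ IsCoprime x.norm n := by
  constructor
  · intro h
    have hstar : IsCoprime (star x) (n : ℤ√d) := by
      simpa only [map_intCast, starRingEnd_apply] using h.map (starRingEnd (ℤ√d))
    exact isCoprime_of_isCoprime_intCast (by rw [norm_eq_mul_conj]; exact h.mul_left hstar)
  · intro h
    have h' := h.map (Int.castRingHom (ℤ√d))
    rw [eq_intCast, eq_intCast, norm_eq_mul_conj] at h'
    exact h'.of_mul_left_left

end Zsqrtd

theorem isCoprime_sq_add_mul_sq_of_dvd_sub {n b u₁ w₁ u₂ w₂ : ℤ} (hw₁ : IsCoprime w₁ n)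
    (hcross : n ∣ u₁ * w₂ - u₂ * w₁) (h₂ : IsCoprime (u₂ ^ 2 + b ^ 2 * w₂ ^ 2) n) :
    IsCoprime (u₁ ^ 2 + b ^ 2 * w₁ ^ 2) n := by
  obtain ⟨k, hk⟩ := hcross
  have hsum : (u₁ ^ 2 + b ^ 2 * w₁ ^ 2) * w₂ ^ 2 =
      (u₂ ^ 2 + b ^ 2 * w₂ ^ 2) * w₁ ^ 2 + n * (k * (u₁ * w₂ + u₂ * w₁)) := by
    linear_combination (u₁ * w₂ + u₂ * w₁) * hk
  have h := (h₂.mul_left (hw₁.pow_left (m := 2))).add_mul_left_left (k * (u₁ * w₂ + u₂ * w₁))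
  rw [← hsum] at h
  exact h.of_mul_left_left

theorem ZMod.dvd_sub_of_mul_inv_eq {c : ℕ} {u₁ w₁ u₂ w₂ : ℤ} (hw₁ : IsUnit (w₁ : ZMod c))
    (hw₂ : IsUnit (w₂ : ZMod c))
    (h : (u₁ : ZMod c) * (w₁ : ZMod c)⁻¹ = u₂ * (w₂ : ZMod c)⁻¹) :
    (c : ℤ) ∣ u₁ * w₂ - u₂ * w₁ := by
  rw [← ZMod.intCast_eq_intCast_iff_dvd_sub]
  push_cast
  calc (u₂ : ZMod c) * w₁ = u₂ * (w₂ : ZMod c)⁻¹ * w₂ * w₁ := by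
        rw [mul_assoc (u₂ : ZMod c), ZMod.inv_mul_of_unit _ hw₂, mul_one]
    _ = u₁ * (w₁ : ZMod c)⁻¹ * w₁ * w₂ := by rw [← h]; ring
    _ = u₁ * w₂ := by rw [mul_assoc (u₁ : ZMod c), ZMod.inv_mul_of_unit _ hw₁, mul_one]

theorem sum_sum_ite_mul_conj_eq_sum_normSq {α β : Type*} [DecidableEq β] (s : Finset α)
    (B : α → Prop) [DecidablePred B] (r : α → β) (g : α → ℂ) :
    ∑ x ∈ s, ∑ y ∈ s, (if B x ∧ B y ∧ r x = r y then g x * starRingEnd ℂ (g y) else 0) =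
      ∑ z ∈ s.image r, ((Complex.normSq (∑ x ∈ s with B x ∧ r x = z, g x) : ℝ) : ℂ) := by
  simp_rw [← Complex.mul_conj, map_sum, sum_mul_sum, sum_filter]
  conv_rhs => rw [sum_comm]
  refine sum_congr rfl fun x hx => ?_
  by_cases hBx : B x
  · simp [hBx, mem_image_of_mem r hx, eq_comm]
  · simp [hBx]

def normForm (b : ℕ) (p : ℤ × ℤ) : ℤ := p.1 ^ 2 + (b : ℤ) ^ 2 * p.2 ^ 2

def ratioMod (c : ℕ) (p : ℤ × ℤ) : ZMod c := (p.1 : ZMod c) * (p.2 : ZMod c)⁻¹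

noncomputable def weight (t : ℝ) (b : ℕ) (f : ℝ → ℂ) (p : ℤ × ℤ) : ℂ :=
  ((moebius (normForm b p).toNat : ℤ) : ℂ) * f (t * (normForm b p : ℝ))

open Classical in
noncomputable def classSum (M t : ℝ) (b c : ℕ) (f : ℝ → ℂ) (Q : ℤ × ℤ → Prop) (z : ZMod c) : ℂ :=
  ∑ p ∈ pairGrid M with (admissible M b c p.1 p.2 ∧ Q p) ∧ ratioMod c p = z, weight t b f p

open Classical in
theorem Tgen_and_eq_sum_normSq_classSum (M t : ℝ) (b c : ℕ) (f : ℝ → ℂ) (Q : ℤ × ℤ → Prop) :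
    Tgen M t b c f (fun p₁ p₂ => Q p₁ ∧ Q p₂) =
      ∑ z ∈ (pairGrid M).image (ratioMod c), ((Complex.normSq (classSum M t b c f Q z) : ℝ) : ℂ) := by
  unfold Tgen classSum
  convert sum_sum_ite_mul_conj_eq_sum_normSq (pairGrid M) (fun p => admissible M b c p.1 p.2 ∧ Q p)
    (ratioMod c) (weight t b f) using 1
  refine sum_congr rfl fun p₁ _ => sum_congr rfl fun p₂ _ => ?_
  congr 1
  · simp only [ratioMod]
    exact propext (by tauto)
  · simp only [weight, normForm, map_mul, map_intCast]
    ring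

theorem isCoprime_normForm_of_ratioMod_eq {b c n : ℕ} (hn : (n : ℤ) ∣ c) {p₁ p₂ : ℤ × ℤ}
    (hw₁ : IsCoprime p₁.2 c) (hw₂ : IsCoprime p₂.2 c) (h : ratioMod c p₁ = ratioMod c p₂)
    (h₂ : IsCoprime (normForm b p₂) n) : IsCoprime (normForm b p₁) n := by
  have hunit : ∀ w : ℤ, IsCoprime w c → IsUnit (w : ZMod c) := fun w hw =>
    (ZMod.coe_int_isUnit_iff_isCoprime w c).2 hw.symm
  exact isCoprime_sq_add_mul_sq_of_dvd_sub (hw₁.of_isCoprime_of_dvd_right hn)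
    (hn.trans (ZMod.dvd_sub_of_mul_inv_eq (hunit _ hw₁) (hunit _ hw₂) h)) h₂

theorem classSum_coprime_eq_zero_or_eq (M t : ℝ) (b : ℕ) {c n : ℕ} (hn : (n : ℤ) ∣ c)
    (f : ℝ → ℂ) (z : ZMod c) :
    classSum M t b c f (fun p => IsCoprime (normForm b p) n) z = 0 ∨
      classSum M t b c f (fun p => IsCoprime (normForm b p) n) z =
        classSum M t b c f (fun _ => True) z := by
  by_cases hz : ∃ p₀ ∈ pairGrid M,
      (admissible M b c p₀.1 p₀.2 ∧ IsCoprime (normForm b p₀) n) ∧ ratioMod c p₀ = z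
  · obtain ⟨p₀, -, ⟨hA₀, hQ₀⟩, hz₀⟩ := hz
    refine Or.inr (sum_congr (ext fun p => ?_) fun _ _ => rfl)
    simp only [mem_filter, and_true]
    refine and_congr_right fun _ => and_congr_left fun hp => ⟨And.left, fun hA => ⟨hA, ?_⟩⟩
    exact isCoprime_normForm_of_ratioMod_eq hn (Int.isCoprime_iff_gcd_eq_one.2 hA.2.2.2.2)
      (Int.isCoprime_iff_gcd_eq_one.2 hA₀.2.2.2.2) (hp.trans hz₀.symm) hQ₀
  · refine Or.inl (sum_eq_zero fun p hp => ?_)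
    simp only [mem_filter] at hp
    exact absurd ⟨p, hp⟩ hz

theorem isCoprime_mk_mul_mk_natCast_iff (b n : ℕ) (p₁ p₂ : ℤ × ℤ) :
    IsCoprime ((⟨p₁.1, (b : ℤ) * p₁.2⟩ : GaussianInt) * ⟨p₂.1, (b : ℤ) * p₂.2⟩)
        (n : GaussianInt) ↔
      IsCoprime (normForm b p₁) n ∧ IsCoprime (normForm b p₂) n := by
  have hnorm : ∀ p : ℤ × ℤ, (⟨p.1, (b : ℤ) * p.2⟩ : GaussianInt).norm = normForm b p := fun p => by
    simp only [Zsqrtd.norm_def, normForm]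
    ring
  rw [← Int.cast_natCast (R := GaussianInt), IsCoprime.mul_left_iff, Zsqrtd.isCoprime_intCast_iff,
    Zsqrtd.isCoprime_intCast_iff, hnorm, hnorm]

theorem positivity_trick_general (M t : ℝ) (b c d : ℕ) (f : ℝ → ℂ) :
    (Tgen M t b c f (fun _ _ => True)).im = 0 ∧
    (Tgen M t b c f (fun p₁ p₂ =>
        IsCoprime ((⟨p₁.1, (b : ℤ) * p₁.2⟩ : GaussianInt) *
            (⟨p₂.1, (b : ℤ) * p₂.2⟩ : GaussianInt))
          ((c / Nat.gcd c d : ℕ) : GaussianInt))).im = 0 ∧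
    0 ≤ (Tgen M t b c f (fun p₁ p₂ =>
        IsCoprime ((⟨p₁.1, (b : ℤ) * p₁.2⟩ : GaussianInt) *
            (⟨p₂.1, (b : ℤ) * p₂.2⟩ : GaussianInt))
          ((c / Nat.gcd c d : ℕ) : GaussianInt))).re ∧
    (Tgen M t b c f (fun p₁ p₂ =>
        IsCoprime ((⟨p₁.1, (b : ℤ) * p₁.2⟩ : GaussianInt) *
            (⟨p₂.1, (b : ℤ) * p₂.2⟩ : GaussianInt))
          ((c / Nat.gcd c d : ℕ) : GaussianInt))).re ≤
      (Tgen M t b c f (fun _ _ => True)).re := by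
  have hn : ((c / c.gcd d : ℕ) : ℤ) ∣ c :=
    Int.natCast_dvd_natCast.2 (Nat.div_dvd_of_dvd (Nat.gcd_dvd_left c d))
  have hTrue : Tgen M t b c f (fun _ _ => True) = Tgen M t b c f (fun _ _ => True ∧ True) := by
    simp only [and_self]
  simp only [isCoprime_mk_mul_mk_natCast_iff]
  rw [hTrue, Tgen_and_eq_sum_normSq_classSum,
    Tgen_and_eq_sum_normSq_classSum M t b c f (fun p => IsCoprime (normForm b p) _)]
  simp only [← Complex.ofReal_sum, Complex.ofReal_im, Complex.ofReal_re]
  refine ⟨trivial, trivial, sum_nonneg fun z _ => Complex.normSq_nonneg _,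
    sum_le_sum fun z _ => ?_⟩
  obtain h | h := classSum_coprime_eq_zero_or_eq M t b hn f z
  · rw [h, Complex.normSq_zero]
    exact Complex.normSq_nonneg _
  · rw [h]

theorem positivity_trick (M t : ℝ) (hM : 1 ≤ M) (ht : 0 < t) (b c d : ℕ)
    (hb : 0 < b) (hc : 0 < c) (hd : 0 < d) (f : ℝ → ℂ) :
    (Tgen M t b c f (fun _ _ => True)).im = 0 ∧
    (Tgen M t b c f (fun p₁ p₂ =>
        IsCoprime ((⟨p₁.1, (b : ℤ) * p₁.2⟩ : GaussianInt) *
            (⟨p₂.1, (b : ℤ) * p₂.2⟩ : GaussianInt))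
          ((c / Nat.gcd c d : ℕ) : GaussianInt))).im = 0 ∧
    0 ≤ (Tgen M t b c f (fun p₁ p₂ =>
        IsCoprime ((⟨p₁.1, (b : ℤ) * p₁.2⟩ : GaussianInt) *
            (⟨p₂.1, (b : ℤ) * p₂.2⟩ : GaussianInt))
          ((c / Nat.gcd c d : ℕ) : GaussianInt))).re ∧
    (Tgen M t b c f (fun p₁ p₂ =>
        IsCoprime ((⟨p₁.1, (b : ℤ) * p₁.2⟩ : GaussianInt) *
            (⟨p₂.1, (b : ℤ) * p₂.2⟩ : GaussianInt))
          ((c / Nat.gcd c d : ℕ) : GaussianInt))).re ≤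
      (Tgen M t b c f (fun _ _ => True)).re :=
  positivity_trick_general M t b c d f
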